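/- arXiv:1608.03551 — 3 statements merged into one kernel-verified Lean document; each statement's English description precedes it below -/
import Mathlib

section
/- Let G be a graph on n vertices with characteristic polynomial φ_G(x) (of its adjacency matrix). Then the characteristic polynomial of the extended bipartite double graph Ĝ satisfies φ_{Ĝ}(x) = (-1)^n · φ_G(x−1) · φ_G(−x−1). -/
open Polynomial Matrix SimpleGraph

/-- The extended bipartite double graph of `G`: two copies of `V`, with `(i, b)`
adjacent to `(j, c)` iff the copies are distinct and either `i ~ j` in `G` or
`i = j` (the latter giving the extra edges `i i'`). -/
def extendedBipartiteDouble {V : Type*} (G : SimpleGraph V) :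
    SimpleGraph (V × Bool) where
  Adj a b := (G.Adj a.1 b.1 ∨ a.1 = b.1) ∧ a.2 ≠ b.2
  symm := ⟨fun a b h => ⟨h.1.imp (fun h' => h'.symm) (fun h' => h'.symm), h.2.symm⟩⟩
  loopless := ⟨fun a h => h.2 rfl⟩

instance {V : Type*} (G : SimpleGraph V) [DecidableEq V] [DecidableRel G.Adj] :
    DecidableRel (extendedBipartiteDouble G).Adj :=
  fun a b => inferInstanceAs (Decidable ((G.Adj a.1 b.1 ∨ a.1 = b.1) ∧ a.2 ≠ b.2))

/-!
Listing the vertices of `Ĝ` copy by copy turns its adjacency matrix into the block matrix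
`[[0, A + 1], [A + 1, 0]]`, and a block matrix `[[P, Q], [Q, P]]` has determinant
`det (P + Q) * det (P - Q)`. Hence `φ_Ĝ = φ_{A+1} · φ_{-(A+1)}`, and the shift and sign rules
`φ_{A+1}(x) = φ_A(x - 1)`, `φ_{-M}(x) = (-1)^n φ_M(-x)` give the formula.
-/

namespace Matrix

variable {m R : Type*} [Fintype m] [DecidableEq m] [CommRing R]

theorem det_fromBlocks_self_swap (P Q : Matrix m m R) :
    (fromBlocks P Q Q P).det = (P + Q).det * (P - Q).det := by
  -- add the second block row to the first, then subtract the first block column from the second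
  have h : fromBlocks 1 1 0 1 * fromBlocks P Q Q P * fromBlocks 1 (-1) 0 1 =
      fromBlocks (P + Q) 0 Q (P - Q) := by
    simp only [fromBlocks_multiply]
    congr 1 <;> noncomm_ring
  simpa [det_fromBlocks_zero₂₁, det_fromBlocks_zero₁₂] using congrArg det h

theorem charmatrix_neg (M : Matrix m m R) :
    (-M).charmatrix = -M.charmatrix.map (compRingHom (-X)) := by
  ext i j
  by_cases h : i = j
  · subst h
    simp only [charmatrix_apply_eq, neg_apply, map_neg, sub_neg_eq_add, coe_compRingHom, map_apply,
      sub_comp, X_comp, C_comp, neg_sub]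
    ring
  · simp [charmatrix_apply_ne _ _ _ h]

theorem charpoly_neg (M : Matrix m m R) :
    (-M).charpoly = (-1) ^ Fintype.card m * M.charpoly.comp (-X) := by
  rw [charpoly, charmatrix_neg, det_neg]
  exact congrArg _ (RingHom.map_det (compRingHom (-X : R[X])) M.charmatrix).symm

theorem charpoly_add_scalar (M : Matrix m m R) (μ : R) :
    (M + scalar m μ).charpoly = M.charpoly.comp (X - C μ) := by
  simpa [sub_eq_add_neg] using charpoly_sub_scalar M (-μ)

theorem charpoly_fromBlocks_zero_self (B : Matrix m m R) :
    (fromBlocks 0 B B 0).charpoly = B.charpoly * (-B).charpoly := by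
  rw [charpoly, charmatrix_fromBlocks, det_fromBlocks_self_swap, charmatrix_zero]
  simp only [charpoly, charmatrix, map_neg, sub_eq_add_neg, neg_neg, RingHom.mapMatrix_apply]

end Matrix

theorem adjMatrix_extendedBipartiteDouble {V R : Type*} [DecidableEq V] [NonAssocSemiring R]
    (G : SimpleGraph V) [DecidableRel G.Adj] :
    reindex ((Equiv.prodComm V Bool).trans (Equiv.boolProdEquivSum V))
        ((Equiv.prodComm V Bool).trans (Equiv.boolProdEquivSum V))
        ((extendedBipartiteDouble G).adjMatrix R) =
      fromBlocks 0 (G.adjMatrix R + 1) (G.adjMatrix R + 1) 0 := by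
  ext (i | i) (j | j) <;> by_cases h : i = j <;>
    simp [extendedBipartiteDouble, adjMatrix_apply, one_apply, h]

theorem charpoly_adjMatrix_extendedBipartiteDouble {V R : Type*} [Fintype V] [DecidableEq V]
    [CommRing R] (G : SimpleGraph V) [DecidableRel G.Adj] :
    ((extendedBipartiteDouble G).adjMatrix R).charpoly =
      (G.adjMatrix R + 1).charpoly * (-(G.adjMatrix R + 1)).charpoly := by
  rw [← charpoly_reindex ((Equiv.prodComm V Bool).trans (Equiv.boolProdEquivSum V)),
    adjMatrix_extendedBipartiteDouble, charpoly_fromBlocks_zero_self]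

/-- The characteristic polynomial of the extended bipartite double graph `Ĝ` of
a graph `G` on `n` vertices satisfies `φ_{Ĝ}(x) = (-1)^n · φ_G(x-1) · φ_G(-x-1)`. -/
theorem charpoly_extendedBipartiteDouble (n : ℕ) (G : SimpleGraph (Fin n))
    [DecidableRel G.Adj] :
    ((extendedBipartiteDouble G).adjMatrix ℝ).charpoly =
      (-1 : ℝ[X]) ^ n * ((G.adjMatrix ℝ).charpoly.comp (X - 1)) *
        ((G.adjMatrix ℝ).charpoly.comp (-X - 1)) := by
  have h_add_one : (G.adjMatrix ℝ + 1).charpoly = (G.adjMatrix ℝ).charpoly.comp (X - 1) := by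
    simpa using charpoly_add_scalar (G.adjMatrix ℝ) 1
  rw [charpoly_adjMatrix_extendedBipartiteDouble, charpoly_neg, h_add_one,
    comp_assoc, Fintype.card_fin]
  simp only [sub_comp, X_comp, one_comp]
  ring
end

section
/- For every k ≥ 2, the middle cube graph MQ_k is isomorphic to the bipartite double graph of the odd graph O_k, via the map sending a vertex u of O_k (a (k−1)-subset of [2k−1]) in the first copy to the vertex of MQ_k with characteristic vector of u, and a vertex u' in the second copy to the vertex with characteristic vector of the complement of u in [2k−1]. -/
open Finset SimpleGraph

/-- The `n`-cube: vertices are binary strings of length `n`, two being adjacent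
iff they differ in exactly one coordinate. -/
def Qcube (n : ℕ) : SimpleGraph (Fin n → Bool) where
  Adj x y := (Finset.univ.filter fun i => x i ≠ y i).card = 1
  symm := by
    constructor
    intro x y h
    simpa [ne_comm] using h
  loopless := by
    constructor
    intro x h
    simp at h

/-- The Hamming weight of a binary string: its number of ones. -/
def wt {n : ℕ} (x : Fin n → Bool) : ℕ := (Finset.univ.filter fun i => x i = true).card

/-- The middle cube graph `MQ_k`: the subgraph of `Q_{2k-1}` induced by the
vertices of Hamming weight `k-1` or `k`. -/
def middleCube (k : ℕ) :
    SimpleGraph {x : Fin (2 * k - 1) → Bool // wt x = k - 1 ∨ wt x = k} :=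
  SimpleGraph.comap Subtype.val (Qcube (2 * k - 1))

/-- The odd graph `O_k` (for `k ≥ 2`): vertices are the `(k-1)`-subsets of
`[2k-1]`, two being adjacent iff they are disjoint. -/
def oddGraph (k : ℕ) (hk : 2 ≤ k) :
    SimpleGraph {s : Finset (Fin (2 * k - 1)) // s.card = k - 1} where
  Adj s t := Disjoint s.1 t.1
  symm := ⟨fun s t h => h.symm⟩
  loopless := by
    constructor
    intro s h
    have h1 : s.1 = ∅ := disjoint_self.mp h
    have h2 := s.2
    rw [h1, Finset.card_empty] at h2
    omega

/-- The bipartite double graph of `G`; `(i, false)` plays the role of the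
vertex `i` and `(i, true)` that of the duplicated vertex `i'`. -/
def bipartiteDouble {V : Type*} (G : SimpleGraph V) : SimpleGraph (V × Bool) where
  Adj a b := G.Adj a.1 b.1 ∧ a.2 ≠ b.2
  symm := ⟨fun a b h => ⟨h.1.symm, h.2.symm⟩⟩
  loopless := ⟨fun a h => h.2 rfl⟩

/-! Map `u` to its characteristic vector and `u'` to that of `uᶜ`. The Hamming distance of
characteristic vectors is `#(s ∆ t) = #s + #t - 2 #(s ∩ t)`. For two vertices on the same side
this is even, so they are never adjacent in `MQ_k`; for `u` and `v'` it is
`#(u ∆ vᶜ) = (2k - 1) - #(u ∆ v) = 1 + 2 #(u ∩ v)`, which is `1` exactly when `u` and `v` are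
disjoint. Weights `k - 1` and `k` pick out the side, which gives bijectivity. -/

open scoped symmDiff

namespace Finset

variable {α : Type*} [DecidableEq α] (s t : Finset α)

theorem card_symmDiff_add_two_mul_card_inter : #(s ∆ t) + 2 * #(s ∩ t) = #s + #t := by
  have := card_sdiff_add_card_eq_card (inter_subset_union (s := s) (t := t))
  rw [symmDiff_eq_sup_sdiff_inf, sup_eq_union, inf_eq_inter]
  have := card_union_add_card_inter s t
  omega

theorem symmDiff_compl_right [Fintype α] : s ∆ tᶜ = (s ∆ t)ᶜ := by
  ext i
  simp only [mem_symmDiff, mem_compl]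
  tauto

variable {s t}

theorem card_symmDiff_ne_one_of_card_eq (h : #s = #t) : #(s ∆ t) ≠ 1 := by
  have := card_symmDiff_add_two_mul_card_inter s t
  omega

theorem card_symmDiff_compl_eq_one_iff [Fintype α] (h : Fintype.card α = #s + #t + 1) :
    #(s ∆ tᶜ) = 1 ↔ Disjoint s t := by
  rw [symmDiff_compl_right, card_compl, disjoint_iff_inter_eq_empty, ← card_eq_zero]
  have := card_symmDiff_add_two_mul_card_inter s t
  omega

end Finset

section CharVec

variable {n : ℕ}

def charVec (s : Finset (Fin n)) : Fin n → Bool := fun i => decide (i ∈ s)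

theorem charVec_compl (s : Finset (Fin n)) : charVec sᶜ = fun i => decide (i ∉ s) := by
  funext i
  simp [charVec]

theorem charVec_filter (x : Fin n → Bool) : charVec {i | x i = true} = x := by
  funext i
  simp [charVec]

theorem wt_charVec (s : Finset (Fin n)) : wt (charVec s) = #s := by
  simp [wt, charVec]

theorem charVec_injective : Function.Injective (charVec (n := n)) := by
  intro s t h
  ext i
  simpa [charVec] using congrFun h i

theorem hammingDist_charVec (s t : Finset (Fin n)) :
    hammingDist (charVec s) (charVec t) = #(s ∆ t) := by
  unfold hammingDist charVec
  congr 1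
  ext i
  simp only [mem_filter, mem_univ, true_and, ne_eq, decide_eq_decide, mem_symmDiff]
  tauto

theorem qcube_adj_iff_hammingDist_eq_one {x y : Fin n → Bool} :
    (Qcube n).Adj x y ↔ hammingDist x y = 1 :=
  Iff.rfl

end CharVec

abbrev OddDoubleVertex (k : ℕ) := {s : Finset (Fin (2 * k - 1)) // #s = k - 1} × Bool

section OddGraphDouble

variable {k : ℕ}

def doubleSet (a : OddDoubleVertex k) :
    Finset (Fin (2 * k - 1)) :=
  cond a.2 a.1.1ᶜ a.1.1

theorem card_doubleSet (a : OddDoubleVertex k) :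
    #(doubleSet a) = cond a.2 k (k - 1) := by
  obtain ⟨⟨s, hs⟩, _ | _⟩ := a
  · exact hs
  · simp only [doubleSet, cond_true, card_compl, Fintype.card_fin, hs]
    omega

def toMiddleCube (a : OddDoubleVertex k) :
    {x : Fin (2 * k - 1) → Bool // wt x = k - 1 ∨ wt x = k} :=
  ⟨charVec (doubleSet a), by rw [wt_charVec, card_doubleSet]; cases a.2 <;> simp⟩

theorem toMiddleCube_injective (hk : 1 ≤ k) : Function.Injective (toMiddleCube (k := k)) := by
  intro a b h
  have hset : doubleSet a = doubleSet b := charVec_injective (congrArg Subtype.val h)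
  have hcard := congrArg card hset
  rw [card_doubleSet, card_doubleSet] at hcard
  obtain ⟨s, _ | _⟩ := a <;> obtain ⟨t, _ | _⟩ := b <;>
    simp only [doubleSet, cond_true, cond_false, compl_inj_iff] at hset hcard
  · rw [Subtype.ext hset]
  · omega
  · omega
  · rw [Subtype.ext hset]

theorem toMiddleCube_surjective : Function.Surjective (toMiddleCube (k := k)) := by
  rintro ⟨x, hx | hx⟩
  · exact ⟨(⟨({i | x i = true} : Finset _), hx⟩, false), Subtype.ext (charVec_filter x)⟩
  · refine ⟨(⟨({i | x i = true} : Finset _)ᶜ, ?_⟩, true), Subtype.ext ?_⟩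
    · rw [card_compl, Fintype.card_fin, ← wt, hx]
      omega
    · simp only [toMiddleCube, doubleSet, cond_true, compl_compl, charVec_filter]

theorem bipartiteDouble_oddGraph_adj_iff (hk : 2 ≤ k)
    (a b : OddDoubleVertex k) :
    (bipartiteDouble (oddGraph k hk)).Adj a b ↔
      (middleCube k).Adj (toMiddleCube a) (toMiddleCube b) := by
  rw [middleCube, comap_adj, qcube_adj_iff_hammingDist_eq_one, toMiddleCube, toMiddleCube,
    hammingDist_charVec]
  obtain ⟨⟨s, hs⟩, _ | _⟩ := a <;> obtain ⟨⟨t, ht⟩, _ | _⟩ := b <;>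
    simp only [bipartiteDouble, oddGraph, doubleSet, cond_true, cond_false, ne_eq,
      not_true_eq_false, and_false, Bool.false_eq_true, Bool.true_eq_false, not_false_eq_true,
      and_true, false_iff, compl_symmDiff_compl]
  · exact card_symmDiff_ne_one_of_card_eq (hs.trans ht.symm)
  · exact (card_symmDiff_compl_eq_one_iff (by simp only [Fintype.card_fin]; omega)).symm
  · rw [symmDiff_comm, disjoint_comm]
    exact (card_symmDiff_compl_eq_one_iff (by simp only [Fintype.card_fin]; omega)).symm
  · exact card_symmDiff_ne_one_of_card_eq (hs.trans ht.symm)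

end OddGraphDouble

/-- For `k ≥ 2`, the middle cube graph `MQ_k` is isomorphic to the bipartite
double graph of the odd graph `O_k`, via the map sending a vertex `u` of `O_k`
in the first copy to the characteristic vector of `u`, and a vertex `u'` of the
second copy to the characteristic vector of the complement of `u` in `[2k-1]`. -/
theorem middleCube_iso_bipartiteDouble_oddGraph (k : ℕ) (hk : 2 ≤ k) :
    ∃ f : {s : Finset (Fin (2 * k - 1)) // s.card = k - 1} × Bool →
          {x : Fin (2 * k - 1) → Bool // wt x = k - 1 ∨ wt x = k},
      (∀ s, (f (s, false)).1 = fun i => decide (i ∈ s.1)) ∧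
      (∀ s, (f (s, true)).1 = fun i => decide (i ∉ s.1)) ∧
      Function.Bijective f ∧
      (∀ a b, (bipartiteDouble (oddGraph k hk)).Adj a b ↔
        (middleCube k).Adj (f a) (f b)) :=
  ⟨toMiddleCube, fun _ => rfl, fun s => charVec_compl s.1,
    ⟨toMiddleCube_injective (by omega), toMiddleCube_surjective⟩,
    bipartiteDouble_oddGraph_adj_iff hk⟩
end

section
/- For every k ≥ 2, the middle cube graph MQ_k is a boundary graph; that is, with distinct adjacency eigenvalues λ_0 > λ_1 > … > λ_{2k−1} given by λ_i = k−i and λ_{k+i} = −(i+1) for 0 ≤ i < k, and π_i = ∏_{j≠i} |λ_i − λ_j|, one has ∑_{i=0}^{2k−1} π_0/π_i = 2·C(2k−1, k), the number of vertices of MQ_k. -/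
open Finset SimpleGraph

/-!
Write the eigenvalues as `k - m` with `m` ranging over `{0, …, 2k} \ {k}`. The product of the
distances from `m` to all other integers of `[0, 2k]` is `m! (2k - m)!`; removing the node
`k` divides it by `|m - k|`, so `π_0 / π_m = |m - k| C(2k, m) / k`. By the symmetry
`m ↦ 2k - m`, `∑_m |m - k| C(2k, m)` is twice `∑_{m ≤ k} (k - m) C(2k, m)`, which telescopes
to `k C(2k-1, k)` because `(n + 1 - 2m) C(n + 1, m) = (n + 1) (C(n, m) - C(n, m - 1))`.
-/

open Nat

def distProd (s : Finset ℕ) (m : ℕ) : ℝ := ∏ l ∈ s.erase m, |(m : ℝ) - l|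

lemma distProd_range_self (m : ℕ) : distProd (range (m + 1)) m = m ! := by
  rw [distProd, range_add_one, erase_insert notMem_range_self, ← prod_range_reflect,
    ← prod_range_add_one_eq_factorial, cast_prod]
  refine prod_congr rfl fun j hj => ?_
  have hj : j < m := mem_range.1 hj
  rw [show m - 1 - j = m - (j + 1) by omega, Nat.cast_sub hj, sub_sub_cancel]
  push_cast
  exact abs_of_nonneg (by positivity)

lemma distProd_range {m n : ℕ} (hmn : m ≤ n) : distProd (range (n + 1)) m = m ! * (n - m)! := by
  induction n, hmn using Nat.le_induction with
  | base => simp [distProd_range_self]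
  | succ n hmn ih =>
    rw [distProd, range_add_one, erase_insert_of_ne (by omega), prod_insert (by simp), ← distProd,
      ih, Nat.sub_add_comm hmn, factorial_succ,
      abs_of_nonpos (by push_cast; linarith [(Nat.cast_le (α := ℝ)).2 hmn])]
    push_cast [Nat.cast_sub hmn]
    ring

lemma distProd_erase_mul_abs_sub {s : Finset ℕ} {m j : ℕ} (hj : j ∈ s) (hjm : j ≠ m) :
    distProd (s.erase j) m * |(m : ℝ) - j| = distProd s m := by
  rw [distProd, distProd, erase_right_comm, prod_erase_mul _ _ (mem_erase.2 ⟨hjm, hj⟩)]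

lemma distProd_range_erase {n m j : ℕ} (hm : m ≤ n) (hj : j ≤ n) (hjm : j ≠ m) :
    distProd ((range (n + 1)).erase j) m = m ! * (n - m)! / |(m : ℝ) - j| := by
  have hne : |(m : ℝ) - j| ≠ 0 := abs_ne_zero.2 (sub_ne_zero.2 (by exact_mod_cast hjm.symm))
  rw [eq_div_iff hne, distProd_erase_mul_abs_sub (mem_range.2 (by omega)) hjm, distProd_range hm]

lemma distProd_zero_div_distProd {n m j : ℕ} (hm : m ≤ n) (hj : j ≤ n) (hj0 : 0 < j)
    (hjm : j ≠ m) :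
    distProd ((range (n + 1)).erase j) 0 / distProd ((range (n + 1)).erase j) m =
      |(m : ℝ) - j| * n.choose m / j := by
  have hj' : (j : ℝ) ≠ 0 := by positivity
  have hne : |(m : ℝ) - j| ≠ 0 := abs_ne_zero.2 (sub_ne_zero.2 (by exact_mod_cast hjm.symm))
  rw [distProd_range_erase (zero_le n) hj hj0.ne', distProd_range_erase hm hj hjm,
    Nat.cast_choose ℝ hm]
  simp only [cast_zero, zero_sub, abs_neg, Nat.abs_cast, factorial_zero, cast_one, one_mul,
    Nat.sub_zero]
  field_simp

lemma sum_range_add_one_sub_two_mul_mul_choose (n t : ℕ) :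
    ∑ m ∈ range (t + 1), ((n + 1 : ℝ) - 2 * m) * (n + 1).choose m = (n + 1) * n.choose t := by
  induction t with
  | zero => simp
  | succ t ih =>
    rw [sum_range_succ, ih]
    have hpascal : ((n + 1).choose (t + 1) : ℝ) = n.choose t + n.choose (t + 1) := by
      exact_mod_cast choose_succ_succ n t
    have habsorb : ((n + 1 : ℝ) * n.choose t) = (n + 1).choose (t + 1) * (t + 1) := by
      exact_mod_cast add_one_mul_choose_eq n t
    push_cast
    linear_combination (n + 1 : ℝ) * hpascal + 2 * habsorb

lemma sum_range_abs_sub_mul_choose (k : ℕ) :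
    ∑ m ∈ range (2 * k + 1), |(m : ℝ) - k| * (2 * k).choose m =
      2 * k * (2 * k - 1).choose k := by
  set f : ℕ → ℝ := fun m => |(m : ℝ) - k| * (2 * k).choose m
  have hsymm : ∑ m ∈ range (k + 1), f (k + m) = ∑ m ∈ range (k + 1), f m := by
    rw [← sum_range_reflect f]
    refine sum_congr rfl fun m hm => ?_
    have hm : m ≤ k := by have := mem_range.1 hm; omega
    simp only [f, add_tsub_cancel_right]
    rw [choose_symm_of_eq_add (show 2 * k = k + m + (k - m) by omega)]
    push_cast [Nat.cast_sub hm]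
    rw [choose_symm_of_eq_add (show 2 * k = k - m + (k + m) by omega)]
    congr 1
    rw [abs_sub_comm]; ring_nf
  have hfull : ∑ m ∈ range (2 * k + 1), f m = 2 * ∑ m ∈ range (k + 1), f m := by
    rw [show 2 * k + 1 = k + (k + 1) by ring, sum_range_add, hsymm, sum_range_succ f k]
    simp [f]
    ring
  have hhalf :
      ∑ m ∈ range (k + 1), f m =
        ∑ m ∈ range (k + 1), ((k : ℝ) - m) * (2 * k).choose m := by
    refine sum_congr rfl fun m hm => ?_
    simp only [f]
    rw [abs_sub_comm, abs_of_nonneg (by simpa using mem_range.1 hm)]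
  rcases k with _ | j
  · simp [f]
  have htele := sum_range_add_one_sub_two_mul_mul_choose (2 * j + 1) (j + 1)
  rw [hfull, hhalf, show 2 * (j + 1) = 2 * j + 1 + 1 by ring, add_tsub_cancel_right]
  push_cast at htele ⊢
  rw [mul_sum, show (2 : ℝ) * (j + 1) = 2 * j + 1 + 1 by ring, ← htele]
  exact sum_congr rfl fun m _ => by ring

lemma sum_distProd_zero_div_distProd {k : ℕ} (hk : 0 < k) :
    ∑ m ∈ (range (2 * k + 1)).erase k,
        distProd ((range (2 * k + 1)).erase k) 0 / distProd ((range (2 * k + 1)).erase k) m =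
      2 * (2 * k - 1).choose k := by
  have hk' : (k : ℝ) ≠ 0 := by positivity
  rw [sum_congr rfl fun m hm => distProd_zero_div_distProd (n := 2 * k)
      (by have := mem_range.1 (mem_of_mem_erase hm); omega) (by omega) hk (ne_of_mem_erase hm).symm,
    ← sum_div, sum_erase _ (by simp), sum_range_abs_sub_mul_choose]
  field_simp

lemma val_succAbove {n : ℕ} (p : Fin (n + 1)) (i : Fin n) :
    (p.succAbove i : ℕ) = if (i : ℕ) < p then (i : ℕ) else (i : ℕ) + 1 := by
  split_ifs with h
  · rw [Fin.succAbove_of_castSucc_lt _ _ (by simpa [Fin.lt_def] using h), Fin.val_castSucc]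
  · rw [Fin.succAbove_of_le_castSucc _ _ (by simpa [Fin.le_def] using h), Fin.val_succ]

lemma map_succAboveEmb_trans_valEmbedding {n : ℕ} (p : Fin (n + 1)) :
    univ.map ((Fin.succAboveEmb p).trans Fin.valEmbedding) = (range (n + 1)).erase p := by
  have hcompl : univ.map p.succAboveEmb = univ.erase p := by
    rw [Fin.univ_succAbove n p, erase_cons]
  rw [← Finset.map_map, hcompl, map_erase,
    Fin.map_valEmbedding_univ, Nat.Iio_eq_range, Fin.valEmbedding_apply]

def boolFunEquivFinset (α : Type*) [Fintype α] [DecidableEq α] :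
    (α → Bool) ≃ Finset α where
  toFun x := univ.filter (x · = true)
  invFun s i := decide (i ∈ s)
  left_inv x := by ext; simp
  right_inv s := by ext; simp

lemma card_wt_eq (n w : ℕ) : Fintype.card {x : Fin n → Bool // wt x = w} = n.choose w := by
  rw [Fintype.card_congr ((boolFunEquivFinset (Fin n)).subtypeEquiv (p := fun x => wt x = w)
    (q := fun s => s.card = w) fun _ => Iff.rfl), Fintype.card_finset_len, Fintype.card_fin]

lemma card_middleCube_vertices {k : ℕ} (hk : 0 < k) :
    Fintype.card {x : Fin (2 * k - 1) → Bool // wt x = k - 1 ∨ wt x = k} =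
      2 * (2 * k - 1).choose k := by
  have hdisj : Disjoint (fun x : Fin (2 * k - 1) → Bool => wt x = k - 1) (fun x => wt x = k) := by
    simp only [Pi.disjoint_iff, Prop.disjoint_iff]
    omega
  rw [Fintype.card_subtype_or_disjoint _ _ hdisj, card_wt_eq, card_wt_eq,
    choose_symm_of_eq_add (show 2 * k - 1 = k - 1 + k by omega)]
  ring

/-- The middle cube graph `MQ_k` is a boundary graph: with its distinct
adjacency eigenvalues `λ_i = k - i`, `λ_{k+i} = -(i+1)` for `0 ≤ i < k`, and
`π_i = ∏_{j ≠ i} |λ_i - λ_j|`, one has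
`∑_{i=0}^{2k-1} π_0 / π_i = 2·C(2k-1, k)`, the number of vertices of `MQ_k`. -/
theorem middleCube_boundary (k : ℕ) (hk : 2 ≤ k)
    (lam : Fin (2 * k) → ℝ)
    (hlam₁ : ∀ i : ℕ, ∀ hi : i < k, lam ⟨i, by omega⟩ = (k : ℝ) - i)
    (hlam₂ : ∀ i : ℕ, ∀ hi : i < k, lam ⟨k + i, by omega⟩ = -((i : ℝ) + 1))
    (pi : Fin (2 * k) → ℝ)
    (hpi : ∀ i, pi i = ∏ j ∈ Finset.univ.erase i, |lam i - lam j|) :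
    (∑ i : Fin (2 * k), pi ⟨0, by omega⟩ / pi i = 2 * Nat.choose (2 * k - 1) k) ∧
    Fintype.card {x : Fin (2 * k - 1) → Bool // wt x = k - 1 ∨ wt x = k} =
      2 * Nat.choose (2 * k - 1) k := by
  refine ⟨?_, card_middleCube_vertices (by omega)⟩
  set S := (range (2 * k + 1)).erase k
  set e := (Fin.succAboveEmb (⟨k, by omega⟩ : Fin (2 * k + 1))).trans Fin.valEmbedding
  have hS : univ.map e = S := map_succAboveEmb_trans_valEmbedding _
  have hlam : ∀ i, lam i = k - e i := by
    intro i
    simp only [e, Function.Embedding.trans_apply, Fin.coe_succAboveEmb, Fin.valEmbedding_apply,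
      val_succAbove]
    split_ifs with h
    · exact hlam₁ i h
    · obtain ⟨j, hj⟩ : ∃ j, (i : ℕ) = k + j := ⟨i - k, by omega⟩
      rw [show i = ⟨k + j, by omega⟩ from Fin.ext hj, hlam₂ j (by omega)]
      push_cast
      ring
  have hpi' : ∀ i, pi i = distProd S (e i) := by
    intro i
    rw [hpi, distProd, ← hS, ← map_erase, prod_map]
    refine prod_congr rfl fun j _ => ?_
    rw [hlam, hlam, abs_sub_comm]
    ring_nf
  have he0 : e ⟨0, by omega⟩ = 0 := by simp [e, val_succAbove]; omega
  calc ∑ i, pi ⟨0, by omega⟩ / pi i = ∑ i, distProd S 0 / distProd S (e i) := by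
        simp only [hpi', he0]
    _ = ∑ m ∈ S, distProd S 0 / distProd S m := by
        rw [← hS, sum_map]
    _ = _ := by exact_mod_cast sum_distProd_zero_div_distProd (by omega)
end
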